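/- Let D ≥ 1 and for a ∈ F₂ let ρ_a^0, ρ_a^1 be density matrices on ℂ^D. Let Δ = max_{a ∈ {0,1}} Σ_{λ} |λ|, the maximum over a of the sum of the absolute values of the eigenvalues (with multiplicity) of the Hermitian matrix ρ_a^0 − ρ_a^1. Fix integers 1 ≤ m ≤ N and a string a ∈ F₂^N, and let {F_{g′}}_{g′ ∈ F₂^m} be a family of positive semidefinite Hermitian matrices on (ℂ^D)^{⊗N} with Σ_{g′ ∈ F₂^m} F_{g′} = 1. Then 2^{−N} · Σ_{g ∈ F₂^N} Tr( F_{(g[1],…,g[m])} · ⊗_{k=1}^N ρ_{a[k]}^{g[k]} ) ≤ (1/2 + Δ/4)^m. -/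

import Mathlib

open Matrix
open scoped ComplexOrder

/-- The `N`-fold Kronecker/tensor product `⊗_{k=1}^N M_k`, as a matrix acting on
`(ℂ^D)^{⊗N}` (indexed by functions `Fin N → Fin D`). -/
noncomputable def tpow {D N : ℕ} (M : Fin N → Matrix (Fin D) (Fin D) ℂ) :
    Matrix (Fin N → Fin D) (Fin N → Fin D) ℂ :=
  Matrix.of fun x y => ∏ i, M i (x i) (y i)

/-!
Write `ρ_a^b = ρ̄_a ± δ_a / 2` with `ρ̄_a = (ρ_a^0 + ρ_a^1) / 2` and `δ_a = ρ_a^0 - ρ_a^1`, and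
fix the last `N - m` bits. Expanding the first `m` tensor factors writes every state as a signed
combination of the product operators with `δ` in a set `E` of positions and `ρ̄` elsewhere,
with coefficients of modulus `2^{-|E|}`. Against a POVM, a weighting `Σ_u χ(u) F_u` with
`|χ| ≤ C` pairs with a Hermitian `T` to at most `C ‖T‖₁`, and the trace norm is multiplicative
on tensor products (diagonalize factorwise). Hence the `2^m` guesses succeed with total weight
at most `Σ_E (Δ/2)^{|E|} = (1 + Δ/2)^m`, and averaging over all `2^N` strings gives the bound.
-/

section

variable {D N : ℕ}

lemma tpow_mul (A B : Fin N → Matrix (Fin D) (Fin D) ℂ) :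
    tpow (fun k => A k * B k) = tpow A * tpow B := by
  ext x y
  simp only [tpow, mul_apply, of_apply, Fintype.prod_sum, Finset.prod_mul_distrib]

lemma tpow_conjTranspose (A : Fin N → Matrix (Fin D) (Fin D) ℂ) :
    tpow (fun k => (A k)ᴴ) = (tpow A)ᴴ := by
  ext x y
  simp [tpow, conjTranspose_apply]

lemma tpow_diagonal (d : Fin N → Fin D → ℂ) :
    tpow (fun k => diagonal (d k)) = diagonal (fun x => ∏ k, d k (x k)) := by
  ext x y
  by_cases h : x = y
  · simp [tpow, h]
  · obtain ⟨k, hk⟩ := Function.ne_iff.mp h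
    rw [tpow, of_apply, diagonal_apply_ne _ h]
    exact Finset.prod_eq_zero (Finset.mem_univ k) (diagonal_apply_ne _ hk)

lemma tpow_one : tpow (fun _ : Fin N => (1 : Matrix (Fin D) (Fin D) ℂ)) = 1 := by
  simpa using tpow_diagonal (D := D) (N := N) fun _ _ => 1

lemma tpow_sum_smul {κ : Type*} [Fintype κ] (c : Fin N → κ → ℂ)
    (M : Fin N → κ → Matrix (Fin D) (Fin D) ℂ) :
    tpow (fun k => ∑ ε, c k ε • M k ε) =
      ∑ E : Fin N → κ, (∏ k, c k (E k)) • tpow (fun k => M k (E k)) := by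
  ext x y
  simp only [tpow, of_apply, Matrix.sum_apply, Matrix.smul_apply, smul_eq_mul, Fintype.prod_sum,
    Finset.prod_mul_distrib]

namespace Matrix

lemma PosSemidef.re_diag_nonneg {n : Type*} {A : Matrix n n ℂ} (hA : A.PosSemidef) (x : n) :
    0 ≤ (A x x).re :=
  (Complex.nonneg_iff.mp hA.diag_nonneg).1

variable {n : Type*} [Fintype n] [DecidableEq n]

/-- The trace norm `∑ |λᵢ|` of a Hermitian matrix; `0` on non-Hermitian matrices. -/
noncomputable def traceNorm (A : Matrix n n ℂ) : ℝ :=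
  if hA : A.IsHermitian then ∑ i, |hA.eigenvalues i| else 0

lemma IsHermitian.traceNorm_eq {A : Matrix n n ℂ} (hA : A.IsHermitian) :
    A.traceNorm = ∑ i, |hA.eigenvalues i| :=
  dif_pos hA

lemma traceNorm_nonneg (A : Matrix n n ℂ) : 0 ≤ A.traceNorm := by
  unfold traceNorm
  split_ifs
  exacts [Finset.sum_nonneg fun i _ => abs_nonneg _, le_rfl]

lemma PosSemidef.traceNorm_eq {A : Matrix n n ℂ} (hA : A.PosSemidef) :
    A.traceNorm = A.trace.re := by
  rw [hA.isHermitian.traceNorm_eq, hA.isHermitian.trace_eq_sum_eigenvalues, Complex.re_sum]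
  exact Finset.sum_congr rfl fun i _ => by simpa using abs_of_nonneg (hA.eigenvalues_nonneg i)

end Matrix

lemma exists_tpow_eq_mul_diagonal_mul (M : Fin N → Matrix (Fin D) (Fin D) ℂ)
    (hM : ∀ k, (M k).IsHermitian) :
    ∃ (U : Matrix (Fin N → Fin D) (Fin N → Fin D) ℂ) (d : (Fin N → Fin D) → ℝ),
      Uᴴ * U = 1 ∧ tpow M = U * diagonal (fun x => (d x : ℂ)) * Uᴴ ∧
        ∑ x, |d x| = ∏ k, (M k).traceNorm := by
  let V k : Matrix (Fin D) (Fin D) ℂ := (hM k).eigenvectorUnitary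
  have hV k : (V k)ᴴ * V k = 1 := Matrix.mem_unitaryGroup_iff'.mp (hM k).eigenvectorUnitary.2
  refine ⟨tpow V, fun x => ∏ k, (hM k).eigenvalues (x k), ?_, ?_, ?_⟩
  · rw [← tpow_conjTranspose, ← tpow_mul]
    simp only [hV, tpow_one]
  · have hMV : M = fun k => V k * diagonal (fun i => ((hM k).eigenvalues i : ℂ)) * (V k)ᴴ :=
      funext fun k => (hM k).spectral_theorem
    conv_lhs => rw [hMV]
    simp only [tpow_mul, tpow_diagonal, tpow_conjTranspose, Complex.ofReal_prod]
  · simp only [Finset.abs_prod, (hM _).traceNorm_eq, Fintype.prod_sum]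

section Duality

variable {n ι : Type*} [Fintype n] [DecidableEq n] [Fintype ι]

lemma re_trace_mul_conj_diagonal (F U : Matrix n n ℂ) (d : n → ℝ) :
    (F * (U * diagonal (fun x => (d x : ℂ)) * Uᴴ)).trace.re =
      ∑ x, ((Uᴴ * F * U) x x).re * d x := by
  rw [← Matrix.mul_assoc, trace_mul_comm]
  simp only [← Matrix.mul_assoc, trace, diag_apply, mul_diagonal, Complex.re_sum,
    Complex.re_mul_ofReal]

lemma sum_re_conj_povm_diag_eq_one (F : ι → Matrix n n ℂ) (hFsum : ∑ i, F i = 1)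
    {U : Matrix n n ℂ} (hU : Uᴴ * U = 1) (x : n) :
    ∑ i, ((Uᴴ * F i * U) x x).re = 1 := by
  rw [← Complex.re_sum, ← Matrix.sum_apply, ← Finset.sum_mul, ← Finset.mul_sum, hFsum,
    Matrix.mul_one, hU, one_apply_eq, Complex.one_re]

lemma sum_mul_re_trace_mul_conj_diagonal_le (F : ι → Matrix n n ℂ) (hF : ∀ i, (F i).PosSemidef)
    (hFsum : ∑ i, F i = 1) {U : Matrix n n ℂ} (hU : Uᴴ * U = 1) (d : n → ℝ)
    (χ : ι → ℝ) {C : ℝ} (hχ : ∀ i, |χ i| ≤ C) :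
    ∑ i, χ i * (F i * (U * diagonal (fun x => (d x : ℂ)) * Uᴴ)).trace.re ≤ C * ∑ x, |d x| := by
  set p : ι → n → ℝ := fun i x => ((Uᴴ * F i * U) x x).re
  have hp i x : 0 ≤ p i x := ((hF i).conjTranspose_mul_mul_same U).re_diag_nonneg x
  have hχp x : |∑ i, χ i * p i x| ≤ C := calc
    |∑ i, χ i * p i x| ≤ ∑ i, |χ i| * p i x := by
      simpa only [abs_mul, abs_of_nonneg (hp _ x)] using
        Finset.abs_sum_le_sum_abs (fun i => χ i * p i x) Finset.univ
    _ ≤ ∑ i, C * p i x := Finset.sum_le_sum fun i _ => mul_le_mul_of_nonneg_right (hχ i) (hp i x)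
    _ = C := by rw [← Finset.mul_sum, sum_re_conj_povm_diag_eq_one F hFsum hU x, mul_one]
  calc ∑ i, χ i * (F i * (U * diagonal (fun x => (d x : ℂ)) * Uᴴ)).trace.re
      = ∑ x, (∑ i, χ i * p i x) * d x := by
        simp only [re_trace_mul_conj_diagonal, Finset.mul_sum, Finset.sum_mul, p]
        rw [Finset.sum_comm]
        simp only [mul_assoc]
    _ ≤ ∑ x, C * |d x| := Finset.sum_le_sum fun x _ => (le_abs_self _).trans
        ((abs_mul _ _).trans_le (mul_le_mul_of_nonneg_right (hχp x) (abs_nonneg _)))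
    _ = C * ∑ x, |d x| := Finset.mul_sum .. |>.symm

end Duality

section Povm

variable {ι : Type*} [Fintype ι]

lemma sum_mul_re_trace_mul_tpow_le (F : ι → Matrix (Fin N → Fin D) (Fin N → Fin D) ℂ)
    (hF : ∀ i, (F i).PosSemidef) (hFsum : ∑ i, F i = 1) (M : Fin N → Matrix (Fin D) (Fin D) ℂ)
    (hM : ∀ k, (M k).IsHermitian) (χ : ι → ℝ) {C : ℝ} (hχ : ∀ i, |χ i| ≤ C) :
    ∑ i, χ i * (F i * tpow M).trace.re ≤ C * ∏ k, (M k).traceNorm := by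
  obtain ⟨U, d, hU, hMU, hd⟩ := exists_tpow_eq_mul_diagonal_mul M hM
  rw [hMU, ← hd]
  exact sum_mul_re_trace_mul_conj_diagonal_le F hF hFsum hU d χ hχ

theorem sum_re_trace_mul_tpow_sum_smul_le {κ : Type*} [Fintype κ]
    (F : ι → Matrix (Fin N → Fin D) (Fin N → Fin D) ℂ)
    (hF : ∀ i, (F i).PosSemidef) (hFsum : ∑ i, F i = 1)
    (M : Fin N → κ → Matrix (Fin D) (Fin D) ℂ) (hM : ∀ k ε, (M k ε).IsHermitian)
    (c : Fin N → κ → ι → ℝ) (C : Fin N → κ → ℝ) (hc : ∀ k ε i, |c k ε i| ≤ C k ε) :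
    ∑ i, (F i * tpow (fun k => ∑ ε, (c k ε i : ℂ) • M k ε)).trace.re
      ≤ ∏ k, ∑ ε, C k ε * (M k ε).traceNorm := by
  calc ∑ i, (F i * tpow (fun k => ∑ ε, (c k ε i : ℂ) • M k ε)).trace.re
      = ∑ E : Fin N → κ, ∑ i, (∏ k, c k (E k) i) * (F i * tpow (fun k => M k (E k))).trace.re := by
        simp only [tpow_sum_smul, Matrix.mul_sum, trace_sum, Complex.re_sum, Matrix.mul_smul,
          trace_smul, ← Complex.ofReal_prod, smul_eq_mul, Complex.re_ofReal_mul]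
        exact Finset.sum_comm
    _ ≤ ∑ E : Fin N → κ, (∏ k, C k (E k)) * ∏ k, (M k (E k)).traceNorm :=
        Finset.sum_le_sum fun E _ => sum_mul_re_trace_mul_tpow_le F hF hFsum _
          (fun k => hM k (E k)) _ fun i => (Finset.abs_prod _ _).trans_le <|
            Finset.prod_le_prod (fun k _ => abs_nonneg _) fun k _ => hc k (E k) i
    _ = ∏ k, ∑ ε, C k ε * (M k ε).traceNorm := by
        simp only [Fintype.prod_sum, Finset.prod_mul_distrib]

end Povm

section Qubit

variable {n : Type*}

noncomputable def qubitBasis (σ : ZMod 2 → Matrix n n ℂ) : Fin 2 → Matrix n n ℂ :=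
  ![(2⁻¹ : ℂ) • (σ 0 + σ 1), σ 0 - σ 1]

noncomputable def qubitCoeff (b : ZMod 2) : Fin 2 → ℝ :=
  ![1, if b = 0 then 2⁻¹ else -2⁻¹]

lemma ZMod.eq_zero_or_eq_one : ∀ b : ZMod 2, b = 0 ∨ b = 1 := by
  decide

lemma sum_qubitCoeff_smul_qubitBasis (σ : ZMod 2 → Matrix n n ℂ) (b : ZMod 2) :
    ∑ ε, (qubitCoeff b ε : ℂ) • qubitBasis σ ε = σ b := by
  rcases ZMod.eq_zero_or_eq_one b with rfl | rfl <;>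
  · ext i j
    simp [Fin.sum_univ_two, qubitCoeff, qubitBasis]
    ring

@[simp]
lemma qubitBasis_one (σ : ZMod 2 → Matrix n n ℂ) : qubitBasis σ 1 = σ 0 - σ 1 :=
  rfl

lemma abs_qubitCoeff_le (b : ZMod 2) (ε : Fin 2) : |qubitCoeff b ε| ≤ ![1, 2⁻¹] ε := by
  rcases ZMod.eq_zero_or_eq_one b with rfl | rfl <;> fin_cases ε <;> simp [qubitCoeff]

lemma posSemidef_qubitBasis_zero [Fintype n] {σ : ZMod 2 → Matrix n n ℂ}
    (hσ : ∀ b, (σ b).PosSemidef) : (qubitBasis σ 0).PosSemidef :=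
  ((hσ 0).add (hσ 1)).smul (by positivity)

lemma isHermitian_qubitBasis [Fintype n] {σ : ZMod 2 → Matrix n n ℂ} (hσ : ∀ b, (σ b).PosSemidef)
    (ε : Fin 2) : (qubitBasis σ ε).IsHermitian := by
  fin_cases ε
  · exact (posSemidef_qubitBasis_zero hσ).isHermitian
  · exact (hσ 0).isHermitian.sub (hσ 1).isHermitian

lemma traceNorm_qubitBasis_zero [Fintype n] [DecidableEq n] {σ : ZMod 2 → Matrix n n ℂ}
    (hσ : ∀ b, (σ b).PosSemidef ∧ (σ b).trace = 1) : (qubitBasis σ 0).traceNorm = 1 := by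
  rw [(posSemidef_qubitBasis_zero fun b => (hσ b).1).traceNorm_eq]
  simp [qubitBasis, (hσ 0).2, (hσ 1).2]
  norm_num

end Qubit

lemma sum_re_trace_mul_tpow_append_le {m n : ℕ}
    (ρ : ZMod 2 → ZMod 2 → Matrix (Fin D) (Fin D) ℂ)
    (hρ : ∀ a g, (ρ a g).PosSemidef ∧ (ρ a g).trace = 1)
    {Δ : ℝ} (hΔ : ∀ a, (ρ a 0 - ρ a 1).traceNorm ≤ Δ) (a : Fin (m + n) → ZMod 2)
    (F : (Fin m → ZMod 2) → Matrix (Fin (m + n) → Fin D) (Fin (m + n) → Fin D) ℂ)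
    (hF : ∀ u, (F u).PosSemidef) (hFsum : ∑ u, F u = 1) (v : Fin n → ZMod 2) :
    ∑ u, (F u * tpow (fun k => ρ (a k) (Fin.append u v k))).trace.re ≤ (1 + Δ / 2) ^ m := by
  -- The first `m` factors are expanded in `qubitBasis`; each of the last `n` is written
  -- trivially as `1 • ρ + 0 • ρ`.
  let M : Fin (m + n) → Fin 2 → Matrix (Fin D) (Fin D) ℂ := fun k =>
    Fin.append (fun _ => qubitBasis (ρ (a k))) (fun j _ => ρ (a k) (v j)) k
  let c : Fin (m + n) → Fin 2 → (Fin m → ZMod 2) → ℝ := fun k ε u =>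
    Fin.append (fun i => qubitCoeff (u i) ε) (fun _ => ![1, 0] ε) k
  let C : Fin (m + n) → Fin 2 → ℝ := Fin.append (fun _ => ![1, 2⁻¹]) (fun _ => ![1, 0])
  have hstate u : (fun k => ρ (a k) (Fin.append u v k)) = fun k => ∑ ε, (c k ε u : ℂ) • M k ε := by
    funext k
    refine Fin.addCases (fun i => ?_) (fun j => ?_) k
    · simp only [M, c, Fin.append_left]
      exact (sum_qubitCoeff_smul_qubitBasis _ _).symm
    · simp [M, c, Fin.sum_univ_two]
  have hM k ε : (M k ε).IsHermitian := by
    refine Fin.addCases (fun i => ?_) (fun j => ?_) k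
    · simpa [M] using isHermitian_qubitBasis (fun b => (hρ _ b).1) ε
    · simpa [M] using (hρ _ (v j)).1.isHermitian
  have hc k ε u : |c k ε u| ≤ C k ε := by
    refine Fin.addCases (fun i => ?_) (fun j => ?_) k
    · simpa [c, C] using abs_qubitCoeff_le (u i) ε
    · fin_cases ε <;> simp [c, C]
  calc ∑ u, (F u * tpow (fun k => ρ (a k) (Fin.append u v k))).trace.re
      = ∑ u, (F u * tpow (fun k => ∑ ε, (c k ε u : ℂ) • M k ε)).trace.re := by
        simp only [hstate]
    _ ≤ ∏ k, ∑ ε, C k ε * (M k ε).traceNorm :=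
        sum_re_trace_mul_tpow_sum_smul_le F hF hFsum M hM c C hc
    _ = ∏ i : Fin m,
          (1 + 2⁻¹ * (ρ (a (Fin.castAdd n i)) 0 - ρ (a (Fin.castAdd n i)) 1).traceNorm) := by
        simp only [Fin.prod_univ_add, M, C, Fin.append_left, Fin.append_right, Fin.sum_univ_two,
          cons_val_zero, cons_val_one, add_zero, traceNorm_qubitBasis_zero (hρ _),
          qubitBasis_one, (hρ _ _).1.traceNorm_eq, (hρ _ _).2, Complex.one_re,
          Finset.prod_const_one, mul_one]
    _ ≤ ∏ _i : Fin m, (1 + Δ / 2) :=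
        Finset.prod_le_prod
          (fun i _ => add_nonneg zero_le_one (mul_nonneg (by norm_num) (traceNorm_nonneg _)))
          fun i _ => by linarith [hΔ (a (Fin.castAdd n i))]
    _ = (1 + Δ / 2) ^ m := by rw [Finset.prod_const, Finset.card_fin]

end

theorem stmt13_general (D N m : ℕ) (hmN : m ≤ N)
    (ρ : ZMod 2 → ZMod 2 → Matrix (Fin D) (Fin D) ℂ)
    (hρ : ∀ a g, (ρ a g).PosSemidef ∧ (ρ a g).trace = 1)
    (hH : ∀ a : ZMod 2, (ρ a 0 - ρ a 1).IsHermitian)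
    (Δ : ℝ)
    (hΔ : Δ = max (∑ i, |(hH 0).eigenvalues i|) (∑ i, |(hH 1).eigenvalues i|))
    (a : Fin N → ZMod 2)
    (Fm : (Fin m → ZMod 2) → Matrix (Fin N → Fin D) (Fin N → Fin D) ℂ)
    (hFm : ∀ g', (Fm g').PosSemidef)
    (hFsum : ∑ g' : Fin m → ZMod 2, Fm g' = 1) :
    ((2:ℝ) ^ N)⁻¹ *
        ∑ g : Fin N → ZMod 2,
          ((Fm (fun i => g (Fin.castLE hmN i)) * tpow (fun k => ρ (a k) (g k))).trace).re
      ≤ (1/2 + Δ/4) ^ m := by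
  obtain ⟨n, rfl⟩ := Nat.exists_eq_add_of_le hmN
  have hΔ' b : (ρ b 0 - ρ b 1).traceNorm ≤ Δ := by
    rcases ZMod.eq_zero_or_eq_one b with rfl | rfl
    · simp [hΔ, (hH 0).traceNorm_eq]
    · simp [hΔ, (hH 1).traceNorm_eq]
  calc ((2:ℝ) ^ (m + n))⁻¹ * ∑ g : Fin (m + n) → ZMod 2,
          ((Fm (fun i => g (Fin.castLE hmN i)) * tpow (fun k => ρ (a k) (g k))).trace).re
      = ((2:ℝ) ^ (m + n))⁻¹ * ∑ v : Fin n → ZMod 2, ∑ u : Fin m → ZMod 2,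
          (Fm u * tpow (fun k => ρ (a k) (Fin.append u v k))).trace.re := by
        rw [← (Fin.appendEquiv m n).sum_comp, Fintype.sum_prod_type, Finset.sum_comm]
        have hhead (u : Fin m → ZMod 2) (v : Fin n → ZMod 2) :
            (fun i => Fin.append u v (Fin.castLE hmN i)) = u :=
          funext (Fin.append_left u v)
        simp only [Fin.appendEquiv_apply, hhead]
    _ ≤ ((2:ℝ) ^ (m + n))⁻¹ * ∑ v : Fin n → ZMod 2, (1 + Δ / 2) ^ m := by
        gcongr with v
        exact sum_re_trace_mul_tpow_append_le ρ hρ hΔ' a Fm hFm hFsum v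
    _ = (1/2 + Δ/4) ^ m := by
        rw [Finset.sum_const, Finset.card_univ, Fintype.card_fun, ZMod.card, Fintype.card_fin,
          nsmul_eq_mul, show (1 / 2 + Δ / 4 : ℝ) = (1 + Δ / 2) / 2 by ring, div_pow, pow_add]
        push_cast
        field_simp

/-- indistinguishability bound.  With `Δ` the maximum over `a ∈ {0,1}`
of the sum of the absolute values of the eigenvalues of `ρ_a^0 − ρ_a^1`, any POVM
`{F_{g′}}_{g′ ∈ F₂^m}` guessing the first `m` bits of a uniformly random `g ∈ F₂^N`
from the state `⊗_k ρ_{a[k]}^{g[k]}` succeeds with probability at most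
`(1/2 + Δ/4)^m`. -/
theorem stmt13 (D N m : ℕ) (hD : 1 ≤ D) (hm : 1 ≤ m) (hmN : m ≤ N)
    (ρ : ZMod 2 → ZMod 2 → Matrix (Fin D) (Fin D) ℂ)
    (hρ : ∀ a g, (ρ a g).PosSemidef ∧ (ρ a g).trace = 1)
    (hH : ∀ a : ZMod 2, (ρ a 0 - ρ a 1).IsHermitian)
    (Δ : ℝ)
    (hΔ : Δ = max (∑ i, |(hH 0).eigenvalues i|) (∑ i, |(hH 1).eigenvalues i|))
    (a : Fin N → ZMod 2)
    (Fm : (Fin m → ZMod 2) → Matrix (Fin N → Fin D) (Fin N → Fin D) ℂ)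
    (hFm : ∀ g', (Fm g').PosSemidef)
    (hFsum : ∑ g' : Fin m → ZMod 2, Fm g' = 1) :
    ((2:ℝ) ^ N)⁻¹ *
        ∑ g : Fin N → ZMod 2,
          ((Fm (fun i => g (Fin.castLE hmN i)) * tpow (fun k => ρ (a k) (g k))).trace).re
      ≤ (1/2 + Δ/4) ^ m :=
  stmt13_general D N m hmN ρ hρ hH Δ hΔ a Fm hFm hFsum
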